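/- arXiv:2605.20720 — 4 statements merged into one kernel-verified Lean document; each statement's English description precedes it below -/
import Mathlib

section
/- Let (B, A, i, e, l) be a cleft extension of abelian categories. For every object X of B and every j ≥ 1 there is an isomorphism L_j F(X) ≅ e(L_j l(X)), where L_j denotes the j-th left derived functor. -/
/-!
Formalization of a statement from "Tilting pairs and Wakamatsu tilting pairs of
subcategories over cleft extensions" by Zhao and Sun.

A cleft extension `(B, A, i, e, l)` of abelian categories is encoded by the
hypotheses: `i : B ⥤ A`, `e : A ⥤ B`, `l : B ⥤ A` additive functors, `e`
faithful and exact (preserves finite limits and colimits), an adjunction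
`adj : l ⊣ e` and a natural isomorphism `i ⋙ e ≅ 𝟭 B`.  The endofunctor `F`
of `B` is encoded, as in the paper, by the split exact sequence of functors
`0 ⟶ F ⟶ l ⋙ e ⟶ 𝟭 B ⟶ 0` (objectwise a short exact sequence, split by the
unit of the adjunction `(l, e)`).  The functor `q : A ⥤ B`, when needed, is a
left adjoint of `i`.
-/

open CategoryTheory CategoryTheory.Limits Opposite

universe w v u u'

noncomputable section

section Defs

variable (C : Type u) [Category.{v} C] [Abelian C] [EnoughProjectives C]

/-- The `j`-th Ext group, as a `ℤ`-module, between two objects of an abelian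
category with enough projectives. -/
def extZ (j : ℕ) (X Y : C) : ModuleCat.{v} ℤ := ((Ext ℤ C j).obj (op X)).obj Y

/-- The left orthogonal class `⊥𝒲` : objects `X` with `Ext^j(X, W) = 0` for all
`j ≥ 1` and all `W ∈ 𝒲`. -/
def perpLeft (𝒲 : Set C) : Set C :=
  {X | ∀ W' ∈ 𝒲, ∀ j : ℕ, 1 ≤ j → IsZero (extZ C j X W')}

/-- The right orthogonal class `𝒲⊥` : objects `X` with `Ext^j(W, X) = 0` for all
`j ≥ 1` and all `W ∈ 𝒲`. -/
def perpRight (𝒲 : Set C) : Set C :=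
  {X | ∀ W' ∈ 𝒲, ∀ j : ℕ, 1 ≤ j → IsZero (extZ C j W' X)}

/-- A class of objects is self-orthogonal if `𝒲 ⊆ ⊥𝒲`. -/
def SelfOrth (𝒲 : Set C) : Prop := 𝒲 ⊆ perpLeft C 𝒲

variable {C}

/-- A composable pair of morphisms is exact (the composite vanishes and the
associated short complex is exact). -/
def IsExactPair {X Y Z : C} (f : X ⟶ Y) (g : Y ⟶ Z) : Prop :=
  ∃ w : f ≫ g = 0, (ShortComplex.mk f g w).Exact

variable (C)

/-- `X` admits an exact sequence `0 → X → T_0 → ⋯ → T_n → 0` with all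
`T_k ∈ S` (the sequence is padded by zero objects in degrees `> n`). -/
def HasFinCoresolution (S : Set C) (n : ℕ) (X : C) : Prop :=
  ∃ (T : ℕ → C) (f : X ⟶ T 0) (d : ∀ k : ℕ, T k ⟶ T (k + 1)),
    Mono f ∧ IsExactPair f (d 0) ∧ (∀ k, IsExactPair (d k) (d (k + 1))) ∧
    (∀ k ≤ n, T k ∈ S) ∧ (∀ k, n < k → IsZero (T k))

/-- `X` admits an exact sequence `0 → C_n → ⋯ → C_1 → C_0 → X → 0` with all
`C_k ∈ S` (the sequence is padded by zero objects in degrees `> n`). -/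
def HasFinResolution (S : Set C) (n : ℕ) (X : C) : Prop :=
  ∃ (D : ℕ → C) (g : D 0 ⟶ X) (d : ∀ k : ℕ, D (k + 1) ⟶ D k),
    Epi g ∧ IsExactPair (d 0) g ∧ (∀ k, IsExactPair (d (k + 1)) (d k)) ∧
    (∀ k ≤ n, D k ∈ S) ∧ (∀ k, n < k → IsZero (D k))

/-- `(𝒞, 𝒯)` is an `n`-tilting pair: both classes are self-orthogonal, every
object of `𝒞` has a finite `𝒯`-coresolution of length `n`, and every object of
`𝒯` has a finite `𝒞`-resolution of length `n`. -/
def IsTiltingPair (n : ℕ) (𝒞 𝒯 : Set C) : Prop :=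
  SelfOrth C 𝒞 ∧ SelfOrth C 𝒯 ∧
    (∀ X ∈ 𝒞, HasFinCoresolution C 𝒯 n X) ∧ (∀ X ∈ 𝒯, HasFinResolution C 𝒞 n X)

/-- The class `X_𝒲` : objects `X ∈ ⊥𝒲` admitting an exact sequence
`0 → X → W_0 → W_1 → ⋯` with all `W_k ∈ 𝒲` and all images in `⊥𝒲`. -/
def XClass (𝒲 : Set C) : Set C :=
  {X | X ∈ perpLeft C 𝒲 ∧
    ∃ (Wo : ℕ → C) (f : X ⟶ Wo 0) (d : ∀ k : ℕ, Wo k ⟶ Wo (k + 1)),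
      (∀ k, Wo k ∈ 𝒲) ∧ Mono f ∧ IsExactPair f (d 0) ∧
      (∀ k, IsExactPair (d k) (d (k + 1))) ∧
      (∀ k, (Limits.image (d k) : C) ∈ perpLeft C 𝒲)}

/-- The class `_𝒞X` : objects `X ∈ 𝒞⊥` admitting an exact sequence
`⋯ → C_1 → C_0 → X → 0` with all `C_k ∈ 𝒞` and all images in `𝒞⊥`. -/
def CoXClass (𝒞 : Set C) : Set C :=
  {X | X ∈ perpRight C 𝒞 ∧
    ∃ (Co : ℕ → C) (g : Co 0 ⟶ X) (d : ∀ k : ℕ, Co (k + 1) ⟶ Co k),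
      (∀ k, Co k ∈ 𝒞) ∧ Epi g ∧ IsExactPair (d 0) g ∧
      (∀ k, IsExactPair (d (k + 1)) (d k)) ∧
      (∀ k, (Limits.image (d k) : C) ∈ perpRight C 𝒞)}

/-- `(𝒞, 𝒲)` is a Wakamatsu tilting pair: both classes are self-orthogonal,
`𝒞 ⊆ X_𝒲` and `𝒲 ⊆ _𝒞X`. -/
def IsWakamatsuTiltingPair (𝒞 𝒲 : Set C) : Prop :=
  SelfOrth C 𝒞 ∧ SelfOrth C 𝒲 ∧ 𝒞 ⊆ XClass C 𝒲 ∧ 𝒲 ⊆ CoXClass C 𝒞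

/-- The right Gorenstein class `rG(𝒲)` : objects `X ∈ ⊥𝒲` admitting an exact
sequence `0 → X → W_0 → W_1 → ⋯` with all `W_k ∈ 𝒲` which remains exact after
applying `Hom(-, W)` for every `W ∈ 𝒲`. -/
def RGClass (𝒲 : Set C) : Set C :=
  {X | X ∈ perpLeft C 𝒲 ∧
    ∃ (Wo : ℕ → C) (f : X ⟶ Wo 0) (d : ∀ k : ℕ, Wo k ⟶ Wo (k + 1)),
      (∀ k, Wo k ∈ 𝒲) ∧ Mono f ∧ IsExactPair f (d 0) ∧
      (∀ k, IsExactPair (d k) (d (k + 1))) ∧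
      (∀ W' ∈ 𝒲,
        (∀ h : X ⟶ W', ∃ h0 : Wo 0 ⟶ W', f ≫ h0 = h) ∧
        (∀ h0 : Wo 0 ⟶ W', f ≫ h0 = 0 → ∃ h1 : Wo 1 ⟶ W', d 0 ≫ h1 = h0) ∧
        (∀ (k : ℕ) (h : Wo (k + 1) ⟶ W'), d k ≫ h = 0 →
          ∃ h' : Wo (k + 2) ⟶ W', d (k + 1) ≫ h' = h))}

/-- `Add T` : direct summands of set-indexed coproducts of copies of `T`. -/
def AddClass [HasCoproducts.{w} C] (T : C) : Set C :=
  {Y | ∃ (I : Type w) (s : Y ⟶ ∐ (fun _ : I => T)) (r : (∐ (fun _ : I => T)) ⟶ Y),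
    s ≫ r = 𝟙 Y}

/-- `T` is an `n`-tilting object: it has projective dimension at most `n`,
`Ext^j(T, T^{(I)}) = 0` for every index set `I` and `1 ≤ j ≤ n`, and every
projective object has a finite `Add T`-coresolution of length `n`. -/
def IsTiltingObject [HasCoproducts.{w} C] (n : ℕ) (T : C) : Prop :=
  HasFinResolution C {P : C | Projective P} n T ∧
    (∀ (I : Type w) (j : ℕ), 1 ≤ j → j ≤ n →
      IsZero (extZ C j T (∐ (fun _ : I => T)))) ∧
    (∀ P : C, Projective P → HasFinCoresolution C (AddClass C T) n P)

/-- The closure under isomorphism of the image of a class of objects under a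
functor: `L(S)` consists of the objects isomorphic to `L X` for some `X ∈ S`. -/
def FunctorImage {D : Type u'} [Category.{v} D] (L : C ⥤ D) (S : Set C) : Set D :=
  {Y | ∃ X ∈ S, Nonempty (L.obj X ≅ Y)}

end Defs

theorem stmt2
    (B : Type u) [Category.{v} B] [Abelian B] [EnoughProjectives B] [EnoughInjectives B]
    (A : Type u') [Category.{v} A] [Abelian A] [EnoughProjectives A] [EnoughInjectives A]
    (i : B ⥤ A) (e : A ⥤ B) (l : B ⥤ A)
    [i.Additive] [e.Additive] [l.Additive]
    [e.Faithful] [PreservesFiniteLimits e] [PreservesFiniteColimits e]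
    (adj : l ⊣ e) (ei : i ⋙ e ≅ 𝟭 B)
    -- the endofunctor `F`, fitting in the split exact sequence `0 → F → e∘l → Id_B → 0`
    (F : B ⥤ B) [F.Additive]
    (ι : F ⟶ l ⋙ e) (π : l ⋙ e ⟶ 𝟭 B)
    (hw : ∀ X : B, ι.app X ≫ π.app X = 0)
    (hses : ∀ X : B, (ShortComplex.mk (ι.app X) (π.app X) (hw X)).ShortExact)
    (hsplit : ∀ X : B, adj.unit.app X ≫ π.app X = 𝟙 X)
    (X : B) (j : ℕ) (hj : 1 ≤ j) :
    Nonempty ((F.leftDerived j).obj X ≅ e.obj ((l.leftDerived j).obj X)) := by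
  obtain ⟨P⟩ : Nonempty (ProjectiveResolution X) := HasProjectiveResolution.out
  set c := ComplexShape.down ℕ with hc
  let K₁ := (F.mapHomologicalComplex c).obj P.complex
  let K₂ := ((l ⋙ e).mapHomologicalComplex c).obj P.complex
  let K₃ := ((𝟭 B).mapHomologicalComplex c).obj P.complex
  let f : K₁ ⟶ K₂ := (NatTrans.mapHomologicalComplex ι c).app P.complex
  let g : K₂ ⟶ K₃ := (NatTrans.mapHomologicalComplex π c).app P.complex
  have w : f ≫ g = 0 := by ext n; exact hw _
  let S : ShortComplex (HomologicalComplex B c) := ShortComplex.mk f g w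
  have hS : S.ShortExact := by
    apply HomologicalComplex.shortExact_of_degreewise_shortExact
    intro n
    exact hses (P.complex.X n)
  have hK₃ : ∀ k : ℕ, IsZero (K₃.homology (k + 1)) := by
    intro k
    have h1 : P.complex.ExactAt (k + 1) := P.complex_exactAt_succ k
    rw [HomologicalComplex.exactAt_iff_isZero_homology] at h1
    exact h1.of_iso ((HomologicalComplex.homologyFunctor B c (k+1)).mapIso
      ((Functor.mapHomologicalComplexIdIso B c).app P.complex))
  obtain ⟨k, rfl⟩ : ∃ k, j = k + 1 := ⟨j - 1, by omega⟩
  have hrel : c.Rel (k + 1 + 1) (k + 1) := by simp [hc]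
  have hmono : Mono (HomologicalComplex.homologyMap f (k + 1)) := by
    have h := hS.homology_exact₁ (k + 1 + 1) (k + 1) hrel
    exact h.mono_g ((hK₃ (k+1)).eq_of_src _ _)
  have hepi : Epi (HomologicalComplex.homologyMap f (k + 1)) := by
    have h := hS.homology_exact₂ (k + 1)
    exact h.epi_f ((hK₃ k).eq_of_tgt _ _)
  have : IsIso (HomologicalComplex.homologyMap f (k + 1)) := isIso_of_mono_of_epi _
  let L := (l.mapHomologicalComplex c).obj P.complex
  refine ⟨P.isoLeftDerivedObj F (k+1) ≪≫ @asIso _ _ _ _ (HomologicalComplex.homologyMap f (k+1)) this ≪≫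
    ?_ ≪≫ e.mapIso (P.isoLeftDerivedObj l (k+1)).symm⟩
  exact ShortComplex.mapHomologyIso (L.sc (k+1)) e

end
end

section
/- Let (B, A, i, e, l) be a cleft extension of abelian categories and X an object of B with L_j F(X) = 0 for all j ≥ 1. Then Ext^j_A(l(X), Y) ≅ Ext^j_B(X, e(Y)) for all j ≥ 1 and every object Y of A. -/
/-!
Formalization of a statement from "Tilting pairs and Wakamatsu tilting pairs of
subcategories over cleft extensions" by Zhao and Sun.

A cleft extension `(B, A, i, e, l)` of abelian categories is encoded by the
hypotheses: `i : B ⥤ A`, `e : A ⥤ B`, `l : B ⥤ A` additive functors, `e`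
faithful and exact (preserves finite limits and colimits), an adjunction
`adj : l ⊣ e` and a natural isomorphism `i ⋙ e ≅ 𝟭 B`.  The endofunctor `F`
of `B` is encoded, as in the paper, by the split exact sequence of functors
`0 ⟶ F ⟶ l ⋙ e ⟶ 𝟭 B ⟶ 0` (objectwise a short exact sequence, split by the
unit of the adjunction `(l, e)`).  The functor `q : A ⥤ B`, when needed, is a
left adjoint of `i`.
-/

open CategoryTheory CategoryTheory.Limits Opposite

universe w v u u'

noncomputable section

section MyAux
variable {B : Type u} [Category.{v} B] [Abelian B]
  {A : Type u'} [Category.{v} A] [Abelian A]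
  {e : A ⥤ B} {l : B ⥤ A} [e.Additive] [l.Additive]

/-- The adjunction hom equivalence as an additive equivalence. -/
def adjAddEquiv (adj : l ⊣ e) (P : B) (Y : A) : (l.obj P ⟶ Y) ≃+ (P ⟶ e.obj Y) :=
  { adj.homEquiv P Y with
    map_add' := fun f g => by
      simp [Adjunction.homEquiv_unit, Preadditive.comp_add] }

/-- The adjunction hom equivalence as an iso of `ℤ`-modules. -/
def adjModuleIso (adj : l ⊣ e) (P : B) (Y : A) :
    ModuleCat.of ℤ (l.obj P ⟶ Y) ≅ ModuleCat.of ℤ (P ⟶ e.obj Y) :=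
  (adjAddEquiv adj P Y).toIntLinearEquiv.toModuleIso

end MyAux

section MyAux2
variable {B : Type u} [Category.{v} B] [Abelian B]
  {A : Type u'} [Category.{v} A] [Abelian A]
  {e : A ⥤ B} {l : B ⥤ A} [e.Additive] [l.Additive]

/-- Adjunction iso of `linearYonedaObj` complexes. -/
def adjComplexIso (adj : l ⊣ e) (K : ChainComplex B ℕ) (Y : A) :
    ChainComplex.linearYonedaObj ((l.mapHomologicalComplex (ComplexShape.down ℕ)).obj K) ℤ Y ≅
      K.linearYonedaObj ℤ (e.obj Y) :=
  HomologicalComplex.Hom.isoOfComponents (fun n => adjModuleIso adj (K.X n) Y)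
    (fun i j hij => by
      ext f
      simp only [ModuleCat.hom_comp, LinearMap.coe_comp, Function.comp_apply, ChainComplex.linearYonedaObj_d]
      show K.d j i ≫ ((adj.homEquiv _ _) f) = (adj.homEquiv _ _) (l.map (K.d j i) ≫ f)
      exact (adj.homEquiv_naturality_left _ _).symm)
end MyAux2

section MyAux3
variable {B : Type u} [Category.{v} B] [Abelian B] [EnoughProjectives B]
  {A : Type u'} [Category.{v} A] [Abelian A]
  {e : A ⥤ B} {l : B ⥤ A} [e.Additive] [l.Additive]
  [e.Faithful] [PreservesFiniteLimits e] [PreservesFiniteColimits e]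

lemma my_quasiIso (adj : l ⊣ e)
    (F : B ⥤ B) [F.Additive] (ι : F ⟶ l ⋙ e) (π : l ⋙ e ⟶ 𝟭 B)
    (hw : ∀ X : B, ι.app X ≫ π.app X = 0)
    (hses : ∀ X : B, (ShortComplex.mk (ι.app X) (π.app X) (hw X)).ShortExact)
    {X : B} (P : ProjectiveResolution X)
    (hLF : ∀ j : ℕ, 1 ≤ j → IsZero ((F.leftDerived j).obj X)) :
    QuasiIso ((l.mapHomologicalComplex (ComplexShape.down ℕ)).map P.π) := by
  have hl : PreservesFiniteColimits l := by
    have := adj.leftAdjoint_preservesColimits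
    infer_instance
  have hle : PreservesFiniteColimits (l ⋙ e) := comp_preservesFiniteColimits l e
  have hGq : QuasiIso (((l ⋙ e).mapHomologicalComplex (ComplexShape.down ℕ)).map P.π) := by
    -- the short exact sequence of complexes
    let g : ((l ⋙ e).mapHomologicalComplex (ComplexShape.down ℕ)).obj P.complex ⟶ P.complex :=
      { f := fun n => π.app _
        comm' := fun p q _ => (π.naturality (P.complex.d p q)).symm }
    let S : ShortComplex (HomologicalComplex B (ComplexShape.down ℕ)) :=
      ShortComplex.mk ((NatTrans.mapHomologicalComplex ι (ComplexShape.down ℕ)).app P.complex) g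
        (by ext n; exact hw _)
    have hSE : S.ShortExact :=
      HomologicalComplex.shortExact_of_degreewise_shortExact S (fun n => hses _)
    rw [quasiIso_iff]
    intro n
    match n with
    | Nat.succ n =>
      have hL : HomologicalComplex.ExactAt
          (((l ⋙ e).mapHomologicalComplex (ComplexShape.down ℕ)).obj
            ((ChainComplex.single₀ B).obj X)) (n + 1) := by
        rw [HomologicalComplex.exactAt_iff]
        exact ShortComplex.exact_of_isZero_X₂ _ ((l ⋙ e).map_isZero
          (HomologicalComplex.isZero_single_obj_X (ComplexShape.down ℕ) 0 X (n + 1)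
            (by simp)))
      rw [quasiIsoAt_iff_exactAt' _ _ hL]
      rw [HomologicalComplex.exactAt_iff_isZero_homology]
      have h1 : IsZero (((F.mapHomologicalComplex (ComplexShape.down ℕ)).obj P.complex).homology
          (n + 1)) :=
        IsZero.of_iso (hLF (n + 1) (by omega)) (P.isoLeftDerivedObj F (n + 1)).symm
      have h3 : IsZero (P.complex.homology (n + 1)) := by
        rw [← HomologicalComplex.exactAt_iff_isZero_homology]
        exact (quasiIsoAt_iff_exactAt' P.π (n + 1)
          (ChainComplex.exactAt_succ_single_obj X n)).1 inferInstance
      exact (hSE.homology_exact₂ (n + 1)).isZero_X₂ (h1.eq_of_src _ _) (h3.eq_of_tgt _ _)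
    | 0 =>
      rw [quasiIsoAt_iff_isIso_homologyMap]
      have hd : IsIso (P.fromLeftDerivedZero' (l ⋙ e)) := inferInstance
      have hpO : IsIso ((((l ⋙ e).mapHomologicalComplex (ComplexShape.down ℕ)).obj
          ((ChainComplex.single₀ B).obj X)).pOpcycles 0) := by
        apply HomologicalComplex.isIso_pOpcycles _ 1 0 (by simp)
        show (l ⋙ e).map (((ChainComplex.single₀ B).obj X).d 1 0) = 0
        rw [HomologicalComplex.single_obj_d, Functor.map_zero]
      have heq : HomologicalComplex.opcyclesMap
          (((l ⋙ e).mapHomologicalComplex (ComplexShape.down ℕ)).map P.π) 0 =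
          P.fromLeftDerivedZero' (l ⋙ e) ≫
            ((((l ⋙ e).mapHomologicalComplex (ComplexShape.down ℕ)).obj
              ((ChainComplex.single₀ B).obj X)).pOpcycles 0) := by
        rw [← cancel_epi (HomologicalComplex.pOpcycles _ 0),
          HomologicalComplex.p_opcyclesMap]
        erw [CategoryTheory.ProjectiveResolution.pOpcycles_comp_fromLeftDerivedZero'_assoc]
        rfl
      have : IsIso (HomologicalComplex.opcyclesMap
          (((l ⋙ e).mapHomologicalComplex (ComplexShape.down ℕ)).map P.π) 0) := by
        rw [heq]; exact @IsIso.comp_isIso _ _ _ _ _ _ _ hd hpO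
      have hnat := HomologicalComplex.homologyι_naturality
        (((l ⋙ e).mapHomologicalComplex (ComplexShape.down ℕ)).map P.π) 0
      have h2 : HomologicalComplex.homologyMap
          (((l ⋙ e).mapHomologicalComplex (ComplexShape.down ℕ)).map P.π) 0 =
          (ChainComplex.isoHomologyι₀ _).hom ≫ HomologicalComplex.opcyclesMap
            (((l ⋙ e).mapHomologicalComplex (ComplexShape.down ℕ)).map P.π) 0 ≫
            (ChainComplex.isoHomologyι₀ _).inv := by
        rw [← cancel_mono (ChainComplex.isoHomologyι₀ _).hom]
        simp only [Category.assoc, HomologicalComplex.isoHomologyι_inv_hom_id,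
          Category.comp_id, HomologicalComplex.isoHomologyι_hom]
        exact hnat
      rw [h2]
      infer_instance
  exact (HomologicalComplex.quasiIso_map_iff_of_preservesHomology
    ((l.mapHomologicalComplex (ComplexShape.down ℕ)).map P.π) e).1 hGq

end MyAux3


theorem stmt3
    (B : Type u) [Category.{v} B] [Abelian B] [EnoughProjectives B] [EnoughInjectives B]
    (A : Type u') [Category.{v} A] [Abelian A] [EnoughProjectives A] [EnoughInjectives A]
    (i : B ⥤ A) (e : A ⥤ B) (l : B ⥤ A)
    [i.Additive] [e.Additive] [l.Additive]
    [e.Faithful] [PreservesFiniteLimits e] [PreservesFiniteColimits e]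
    (adj : l ⊣ e) (ei : i ⋙ e ≅ 𝟭 B)
    -- the endofunctor `F`, fitting in the split exact sequence `0 → F → e∘l → Id_B → 0`
    (F : B ⥤ B) [F.Additive]
    (ι : F ⟶ l ⋙ e) (π : l ⋙ e ⟶ 𝟭 B)
    (hw : ∀ X : B, ι.app X ≫ π.app X = 0)
    (hses : ∀ X : B, (ShortComplex.mk (ι.app X) (π.app X) (hw X)).ShortExact)
    (hsplit : ∀ X : B, adj.unit.app X ≫ π.app X = 𝟙 X)
    (X : B) (hLF : ∀ j : ℕ, 1 ≤ j → IsZero ((F.leftDerived j).obj X)) :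
    ∀ (j : ℕ), 1 ≤ j → ∀ (Y : A),
      Nonempty (extZ A j (l.obj X) Y ≅ extZ B j X (e.obj Y)) := by
  intro j hj Y
  letI P : ProjectiveResolution X := projectiveResolution X
  have hq := my_quasiIso adj F ι π hw hses P hLF
  let Q : ProjectiveResolution (l.obj X) :=
    { complex := (l.mapHomologicalComplex (ComplexShape.down ℕ)).obj P.complex
      projective := fun n => adj.map_projective _ (P.projective n)
      π := (l.mapHomologicalComplex (ComplexShape.down ℕ)).map P.π ≫
        (HomologicalComplex.singleMapHomologicalComplex l (ComplexShape.down ℕ) 0).hom.app X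
      quasiIso := by have := hq; infer_instance }
  exact ⟨(Q.isoExt j Y) ≪≫
    (HomologicalComplex.homologyFunctor (ModuleCat ℤ) (ComplexShape.up ℕ) j).mapIso
      (adjComplexIso adj P.complex Y) ≪≫ (P.isoExt j (e.obj Y)).symm⟩


end
end

section
/- Let (B, A, i, e, l) be a cleft extension of abelian categories and X an object of B. If L_j l(X) = 0 for all j ≥ 1, then L_j q(l(X)) = 0 for all j ≥ 1, where q : A → B is the left adjoint of i. -/
/-!
Formalization of a statement from "Tilting pairs and Wakamatsu tilting pairs of
subcategories over cleft extensions" by Zhao and Sun.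

A cleft extension `(B, A, i, e, l)` of abelian categories is encoded by the
hypotheses: `i : B ⥤ A`, `e : A ⥤ B`, `l : B ⥤ A` additive functors, `e`
faithful and exact (preserves finite limits and colimits), an adjunction
`adj : l ⊣ e` and a natural isomorphism `i ⋙ e ≅ 𝟭 B`.  The endofunctor `F`
of `B` is encoded, as in the paper, by the split exact sequence of functors
`0 ⟶ F ⟶ l ⋙ e ⟶ 𝟭 B ⟶ 0` (objectwise a short exact sequence, split by the
unit of the adjunction `(l, e)`).  The functor `q : A ⥤ B`, when needed, is a
left adjoint of `i`.
-/

open CategoryTheory CategoryTheory.Limits Opposite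

universe w v u u'

noncomputable section

section Stmt5Aux

variable {B' : Type u} [Category.{v} B'] [Abelian B']
variable {A' : Type u'} [Category.{v} A'] [Abelian A']

/-- If `l` is a left adjoint to an epi-preserving functor, and `l` applied to a projective
resolution of `X` is exact in positive degrees, then it is a projective resolution of `l.obj X`. -/
noncomputable def mapRes (l : B' ⥤ A') [l.Additive] {e : A' ⥤ B'} (adj : l ⊣ e)
    [e.PreservesEpimorphisms] {X : B'} (P : ProjectiveResolution X)
    (hexact : ∀ n : ℕ,
      ((l.mapHomologicalComplex (ComplexShape.down ℕ)).obj P.complex).ExactAt (n + 1)) :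
    ProjectiveResolution (l.obj X) where
  complex := (l.mapHomologicalComplex _).obj P.complex
  projective n := adj.map_projective _ (P.projective n)
  π := (ChainComplex.toSingle₀Equiv _ _).symm ⟨l.map (P.π.f 0), by
      exact (l.map_comp (P.complex.d 1 0) (P.π.f 0)).symm.trans ((congrArg l.map P.complex_d_comp_π_f_zero).trans (l.map_zero _ _))⟩
  quasiIso := ⟨fun n => by
    haveI := Adjunction.leftAdjoint_preservesColimits.{0, 0} adj
    cases n with
    | zero =>
      rw [ChainComplex.quasiIsoAt₀_iff, ShortComplex.quasiIso_iff_of_zeros']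
      · have hcolim := Limits.isColimitCoforkMapOfIsColimit' l P.complex_d_comp_π_f_zero
          P.isColimitCokernelCofork
        have hex : (ShortComplex.mk (l.map (P.complex.d 1 0)) (l.map (P.π.f 0))
            (by rw [← l.map_comp, ProjectiveResolution.complex_d_comp_π_f_zero,
              l.map_zero])).Exact :=
          ShortComplex.exact_of_g_is_cokernel _ hcolim
        refine (ShortComplex.exact_and_epi_g_iff_of_iso ?_).2 ⟨hex, ?_⟩
        · exact ShortComplex.isoMk (Iso.refl _) (Iso.refl _) (Iso.refl _)
            (by erw [Category.id_comp, Category.comp_id]; rfl) (by erw [Category.id_comp, Category.comp_id]; exact (ChainComplex.toSingle₀Equiv_symm_apply_f_zero (C := (l.mapHomologicalComplex (ComplexShape.down ℕ)).obj P.complex) (X := l.obj X) (l.map (P.π.f 0)) _).symm)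
        · dsimp
          have h : Epi (P.π.f 0) := inferInstance
          exact @Functor.map_epi _ _ _ _ l _ _ _ (P.π.f 0) h
      all_goals (first | rfl | exact HomologicalComplex.shape ((l.mapHomologicalComplex _).obj P.complex) 0 0 (by simp))
    | succ n =>
      rw [quasiIsoAt_iff_exactAt']
      · exact hexact n
      · apply ChainComplex.exactAt_succ_single_obj⟩

end Stmt5Aux

theorem stmt5
    (B : Type u) [Category.{v} B] [Abelian B] [EnoughProjectives B] [EnoughInjectives B]
    (A : Type u') [Category.{v} A] [Abelian A] [EnoughProjectives A] [EnoughInjectives A]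
    (i : B ⥤ A) (e : A ⥤ B) (l : B ⥤ A)
    [i.Additive] [e.Additive] [l.Additive]
    [e.Faithful] [PreservesFiniteLimits e] [PreservesFiniteColimits e]
    (adj : l ⊣ e) (ei : i ⋙ e ≅ 𝟭 B)
    -- the left adjoint `q` of `i`
    (q : A ⥤ B) [q.Additive] (adjq : q ⊣ i)
    (X : B) (hLl : ∀ j : ℕ, 1 ≤ j → IsZero ((l.leftDerived j).obj X)) :
    ∀ j : ℕ, 1 ≤ j → IsZero ((q.leftDerived j).obj (l.obj X)) := by
  intro j hj
  obtain ⟨n, rfl⟩ : ∃ n, j = n + 1 := ⟨j - 1, by omega⟩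
  haveI := Adjunction.leftAdjoint_preservesColimits.{0, 0} adj
  let P : ProjectiveResolution X := ProjectiveResolution.of X
  have hexact : ∀ m : ℕ,
      ((l.mapHomologicalComplex (ComplexShape.down ℕ)).obj P.complex).ExactAt (m + 1) := by
    intro m
    rw [HomologicalComplex.exactAt_iff_isZero_homology]
    exact (hLl (m + 1) (by omega)).of_iso (P.isoLeftDerivedObj l (m + 1)).symm
  let Q : ProjectiveResolution (l.obj X) := mapRes l adj P hexact
  let α : l ⋙ q ≅ 𝟭 B := ((adj.comp adjq).ofNatIsoRight ei).leftAdjointUniq Adjunction.id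
  let iso1 : (q.mapHomologicalComplex (ComplexShape.down ℕ)).obj Q.complex ≅
      ((l ⋙ q).mapHomologicalComplex (ComplexShape.down ℕ)).obj P.complex := Iso.refl _
  let hiso : (q.mapHomologicalComplex (ComplexShape.down ℕ)).obj Q.complex ≅ P.complex :=
    iso1 ≪≫ (NatIso.mapHomologicalComplex α _).app P.complex ≪≫
      (Functor.mapHomologicalComplexIdIso B _).app P.complex
  have h0 : IsZero (P.complex.homology (n + 1)) := by
    rw [← HomologicalComplex.exactAt_iff_isZero_homology]
    exact P.complex_exactAt_succ n
  exact h0.of_iso (Q.isoLeftDerivedObj q (n + 1) ≪≫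
    (HomologicalComplex.homologyFunctor B _ (n + 1)).mapIso hiso)

end
end

section
/- Let (B, A, i, e, l) be a cleft extension of abelian categories with left adjoint q : A → B of i. If the only object X of A with q(X) = 0 is the zero object (Ker q = 0), then an object of A is projective if and only if it is isomorphic to l(P) for some projective object P of B; that is, l(Proj B) = Proj A. -/
/-!
Formalization of a statement from "Tilting pairs and Wakamatsu tilting pairs of
subcategories over cleft extensions" by Zhao and Sun.

A cleft extension `(B, A, i, e, l)` of abelian categories is encoded by the
hypotheses: `i : B ⥤ A`, `e : A ⥤ B`, `l : B ⥤ A` additive functors, `e`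
faithful and exact (preserves finite limits and colimits), an adjunction
`adj : l ⊣ e` and a natural isomorphism `i ⋙ e ≅ 𝟭 B`.  The endofunctor `F`
of `B` is encoded, as in the paper, by the split exact sequence of functors
`0 ⟶ F ⟶ l ⋙ e ⟶ 𝟭 B ⟶ 0` (objectwise a short exact sequence, split by the
unit of the adjunction `(l, e)`).  The functor `q : A ⥤ B`, when needed, is a
left adjoint of `i`.
-/

open CategoryTheory CategoryTheory.Limits Opposite

universe w v u u'

noncomputable section

theorem stmt9
    (B : Type u) [Category.{v} B] [Abelian B] [EnoughProjectives B] [EnoughInjectives B]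
    (A : Type u') [Category.{v} A] [Abelian A] [EnoughProjectives A] [EnoughInjectives A]
    (i : B ⥤ A) (e : A ⥤ B) (l : B ⥤ A)
    [i.Additive] [e.Additive] [l.Additive]
    [e.Faithful] [PreservesFiniteLimits e] [PreservesFiniteColimits e]
    (adj : l ⊣ e) (ei : i ⋙ e ≅ 𝟭 B)
    -- the left adjoint `q` of `i`
    (q : A ⥤ B) [q.Additive] (adjq : q ⊣ i)
    (hker : ∀ X : A, IsZero (q.obj X) → IsZero X) :
    FunctorImage B l {P : B | Projective P} = {Q : A | Projective Q} := by
  haveI : q.IsLeftAdjoint := adjq.isLeftAdjoint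
  haveI := adjq.leftAdjoint_preservesColimits
  -- `i` preserves epimorphisms
  haveI hie : i.PreservesEpimorphisms := by
    constructor
    intro X Y f hf
    apply e.epi_of_epi_map (f := i.map f)
    have hnat : (i ⋙ e).map f = ei.hom.app X ≫ f ≫ ei.inv.app Y := by
      have h := ei.hom.naturality f
      simp only [Functor.id_map] at h
      rw [← Category.assoc, ← h]
      simp
    have : Epi ((i ⋙ e).map f) := by rw [hnat]; infer_instance
    exact this
  -- the counit of `l ⊣ e` is objectwise epi
  have hce : ∀ X : A, Epi (adj.counit.app X) := by
    intro X
    apply e.epi_of_epi_map (f := adj.counit.app X)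
    haveI : IsSplitEpi (e.map (adj.counit.app X)) :=
      ⟨⟨⟨adj.unit.app (e.obj X), adj.right_triangle_components X⟩⟩⟩
    infer_instance
  -- `l ⋙ q ≅ 𝟭 B`
  let φ : l ⋙ q ≅ 𝟭 B := ((adj.comp adjq).ofNatIsoRight ei).leftAdjointUniq Adjunction.id
  ext Y
  simp only [FunctorImage, Set.mem_setOf_eq]
  constructor
  · rintro ⟨P, hP, ⟨ψ⟩⟩
    exact Projective.of_iso ψ (adj.map_projective P hP)
  · intro hQ
    haveI : Projective Y := hQ
    haveI hqP : Projective (q.obj Y) := adjq.map_projective Y hQ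
    haveI := hce Y
    haveI : Epi (q.map (adj.counit.app Y)) :=
      Functor.PreservesEpimorphisms.preserves (adj.counit.app Y)
    set δ : e.obj Y ⟶ q.obj Y := φ.inv.app (e.obj Y) ≫ q.map (adj.counit.app Y) with hδ
    haveI : Epi δ := epi_comp _ _
    set σ : q.obj Y ⟶ e.obj Y := Projective.factorThru (𝟙 (q.obj Y)) δ with hσdef
    have hσ : σ ≫ δ = 𝟙 (q.obj Y) := Projective.factorThru_comp _ _
    set f : l.obj (q.obj Y) ⟶ Y := l.map σ ≫ adj.counit.app Y with hfdef
    -- `q.map f` is an isomorphism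
    have key : φ.inv.app (q.obj Y) ≫ q.map f = 𝟙 (q.obj Y) := by
      rw [hfdef, Functor.map_comp, ← Category.assoc]
      have hn : φ.inv.app (q.obj Y) ≫ q.map (l.map σ) = σ ≫ φ.inv.app (e.obj Y) := by
        simpa using (φ.inv.naturality σ).symm
      rw [hn, Category.assoc, ← hδ, hσ]
    haveI : IsIso (q.map f) := by
      rw [(IsIso.inv_eq_of_hom_inv_id key).symm]
      infer_instance
    -- `f` is epi, using `hker` on its cokernel
    have hzc : IsZero (q.obj (cokernel f)) := by
      refine IsZero.of_iso ?_ (PreservesCokernel.iso q f)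
      exact IsZero.of_iso (isZero_zero B) (cokernel.ofEpi (q.map f))
    haveI hf_epi : Epi f :=
      CategoryTheory.Abelian.epi_of_cokernel_π_eq_zero f
        ((hker _ hzc).eq_of_tgt (cokernel.π f) 0)
    -- `f` splits since `Y` is projective
    set s : Y ⟶ l.obj (q.obj Y) := Projective.factorThru (𝟙 Y) f with hsdef
    have hs : s ≫ f = 𝟙 Y := Projective.factorThru_comp _ _
    -- retraction of the kernel inclusion
    have hw : (𝟙 (l.obj (q.obj Y)) - f ≫ s) ≫ f = 0 := by
      rw [Preadditive.sub_comp, Category.id_comp, Category.assoc, hs, Category.comp_id,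
        sub_self]
    set r : l.obj (q.obj Y) ⟶ kernel f := kernel.lift f (𝟙 _ - f ≫ s) hw with hrdef
    have hri : r ≫ kernel.ι f = 𝟙 _ - f ≫ s := kernel.lift_ι _ _ _
    have hir : kernel.ι f ≫ r = 𝟙 (kernel f) := by
      rw [← cancel_mono (kernel.ι f), Category.assoc, hri, Preadditive.comp_sub,
        Category.comp_id, ← Category.assoc, kernel.condition, zero_comp, sub_zero,
        Category.id_comp]
    -- `q.map (kernel.ι f) = 0`
    have h0 : q.map (kernel.ι f) = 0 := by
      rw [← cancel_mono (q.map f), ← q.map_comp, kernel.condition, q.map_zero, zero_comp]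
    -- the kernel vanishes
    have hzk : IsZero (kernel f) := by
      apply hker
      rw [IsZero.iff_id_eq_zero, ← q.map_id, ← hir, q.map_comp, h0, zero_comp]
    haveI : Mono f :=
      CategoryTheory.Abelian.mono_of_kernel_ι_eq_zero f (hzk.eq_of_src (kernel.ι f) 0)
    haveI : IsIso f := isIso_of_mono_of_epi f
    exact ⟨q.obj Y, hqP, ⟨asIso f⟩⟩

end
end
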